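/- arXiv:2005.12564 — 2 statements merged into one kernel-verified Lean document; each statement's English description precedes it below -/
import Mathlib

section
/- Let $f : [0,1] \to \mathbb{R}$ be of bounded total variation $V(f)$ and let $y_1,\dots,y_N \in [0,1]$ have star-discrepancy $D^*_N$. Then $\left| \frac{1}{N}\sum_{n=1}^N f(y_n) - \int_0^1 f(y)\,dy \right| \le V(f) \cdot D^*_N$ (the one-dimensional Koksma inequality). -/
open Finset intervalIntegral

/-- One-dimensional star-discrepancy of points `y 0, …, y (N-1)` in `[0,1]`. -/
noncomputable def starDisc1 (N : ℕ) (y : Fin N → ℝ) : ℝ :=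
  sSup { r : ℝ | ∃ z ∈ Set.Icc (0:ℝ) 1,
    r = |((Finset.univ.filter (fun n : Fin N => y n < z)).card : ℝ) / N - z| }

lemma sum_abs_le_evar (f : ℝ → ℝ) {s : Set ℝ} (hfs : BoundedVariationOn f s)
    {u : ℕ → ℝ} (hu : Monotone u) (us : ∀ i, u i ∈ s) (m : ℕ) :
    ∑ k ∈ Finset.range m, |f (u (k + 1)) - f (u k)| ≤ (eVariationOn f s).toReal := by
  have h := eVariationOn.sum_le (f := f) (n := m) hu us
  have hmono := ENNReal.toReal_mono hfs h
  have hfin : ∀ k ∈ Finset.range m, edist (f (u (k+1))) (f (u k)) ≠ ⊤ := by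
    intro k hk
    exact ne_top_of_le_ne_top hfs ((eVariationOn.edist_le f (us (k+1)) (us k)))
  rw [ENNReal.toReal_sum hfin] at hmono
  calc ∑ k ∈ Finset.range m, |f (u (k + 1)) - f (u k)|
      = ∑ k ∈ Finset.range m, (edist (f (u (k+1))) (f (u k))).toReal := by
        refine Finset.sum_congr rfl fun k _ => ?_
        rw [edist_dist, ENNReal.toReal_ofReal dist_nonneg, Real.dist_eq]
    _ ≤ _ := hmono

lemma sum_evar_le (f : ℝ → ℝ) {u : ℕ → ℝ} (hu : Monotone u) (m : ℕ) :
    ∑ k ∈ Finset.range m, eVariationOn f (Set.Icc (u k) (u (k+1)))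
      ≤ eVariationOn f (Set.Icc (u 0) (u m)) := by
  induction m with
  | zero => simp
  | succ m ih =>
    rw [Finset.sum_range_succ]
    have key : eVariationOn f (Set.Icc (u 0) (u m)) + eVariationOn f (Set.Icc (u m) (u (m+1)))
        = eVariationOn f (Set.Icc (u 0) (u (m+1))) := by
      have h := eVariationOn.Icc_add_Icc f (s := Set.Icc (u 0) (u (m+1)))
        (hu (Nat.zero_le m)) (hu (Nat.le_succ m)) ⟨hu (Nat.zero_le m), hu (Nat.le_succ m)⟩
      rwa [Set.inter_eq_right.mpr (Set.Icc_subset_Icc le_rfl (hu (Nat.le_succ m))),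
        Set.inter_eq_right.mpr (Set.Icc_subset_Icc (hu (Nat.zero_le m)) le_rfl),
        Set.inter_eq_right.mpr (Set.Icc_subset_Icc le_rfl le_rfl)] at h
    rw [← key]
    exact add_le_add_left ih _

lemma abel_id (c : ℝ) (u : ℕ → ℝ) (g : ℕ → ℝ) (m : ℕ) :
    ∑ k ∈ Finset.range m, (c - u k) * (g (k+1) - g k)
      = (c - u m) * g m - (c - u 0) * g 0
        + ∑ k ∈ Finset.range m, (u (k+1) - u k) * g (k+1) := by
  induction m with
  | zero => simp
  | succ m ih => rw [Finset.sum_range_succ, ih, Finset.sum_range_succ]; ring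

lemma bv_intervalIntegrable (f : ℝ → ℝ) (hf : BoundedVariationOn f (Set.Icc 0 1))
    {x y : ℝ} (hx : x ∈ Set.Icc (0:ℝ) 1) (hy : y ∈ Set.Icc (0:ℝ) 1) :
    IntervalIntegrable f MeasureTheory.volume x y := by
  obtain ⟨p, q, hp, hq, hpq⟩ :=
    hf.locallyBoundedVariationOn.exists_monotoneOn_sub_monotoneOn
  have hxy : Set.uIcc x y ⊆ Set.Icc (0:ℝ) 1 := Set.uIcc_subset_Icc hx hy
  rw [hpq]
  exact ((hp.mono hxy).intervalIntegrable).sub ((hq.mono hxy).intervalIntegrable)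

lemma stieltjes_bound (f : ℝ → ℝ) {a b c M : ℝ} (hab : a ≤ b)
    (hsub : Set.Icc a b ⊆ Set.Icc 0 1) (hf : BoundedVariationOn f (Set.Icc 0 1))
    (hM : ∀ t ∈ Set.Icc a b, |c - t| ≤ M) :
    |(c - b) * f b - (c - a) * f a + ∫ t in a..b, f t|
      ≤ M * (eVariationOn f (Set.Icc a b)).toReal := by
  have hint : ∀ x y : ℝ, x ∈ Set.Icc a b → y ∈ Set.Icc a b →
      IntervalIntegrable f MeasureTheory.volume x y := fun x y hx hy =>
    bv_intervalIntegrable f hf (hsub hx) (hsub hy)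
  set Var : ℝ := (eVariationOn f (Set.Icc a b)).toReal with hVar
  have hfab : BoundedVariationOn f (Set.Icc a b) := hf.mono hsub
  have hVar0 : 0 ≤ Var := ENNReal.toReal_nonneg
  have hM0 : 0 ≤ M := (abs_nonneg _).trans (hM a ⟨le_rfl, hab⟩)
  have key : ∀ m : ℕ, |(c - b) * f b - (c - a) * f a + ∫ t in a..b, f t|
      ≤ M * Var + (b - a) / (m + 1) * Var := by
    intro m
    set δ : ℝ := (b - a) / (m + 1) with hδ
    have hδ0 : 0 ≤ δ := div_nonneg (sub_nonneg.mpr hab) (by positivity)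
    set u : ℕ → ℝ := fun k => a + (min k (m + 1) : ℕ) * δ with hu_def
    have hu : Monotone u := fun i j hij => by
      dsimp [u]
      have hc : ((min i (m+1) : ℕ) : ℝ) ≤ ((min j (m+1) : ℕ) : ℝ) := by
        exact_mod_cast min_le_min hij le_rfl
      exact add_le_add_right (mul_le_mul_of_nonneg_right hc hδ0) a
    have hu0 : u 0 = a := by
      simp only [hu_def]
      norm_num
    have hm1 : (m:ℝ) + 1 ≠ 0 := by positivity
    have hb' : a + ((m:ℝ) + 1) * δ = b := by
      have h2 : ((m:ℝ) + 1) * δ = b - a := by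
        rw [hδ, mul_comm, div_mul_cancel₀ _ hm1]
      rw [h2]; ring
    have hum : u (m + 1) = b := by
      simp only [u, min_self]
      push_cast
      exact hb' 
    have huk : ∀ k ≤ m + 1, u k = a + k * δ := by
      intro k hk
      simp only [hu_def]
      rw [min_eq_left hk]
    have hus : ∀ k, u k ∈ Set.Icc a b := by
      intro k
      constructor
      · dsimp [u]
        exact le_add_of_nonneg_right (mul_nonneg (Nat.cast_nonneg _) hδ0)
      · dsimp [u]
        have hc : ((min k (m+1) : ℕ) : ℝ) * δ ≤ ((m+1 : ℕ) : ℝ) * δ := by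
          refine mul_le_mul_of_nonneg_right ?_ hδ0
          exact_mod_cast min_le_right _ _
        refine (add_le_add_right hc a).trans ?_
        push_cast
        exact le_of_eq hb' 
    -- step increments equal δ within range
    have hstep : ∀ k ∈ Finset.range (m + 1), u (k + 1) - u k = δ := by
      intro k hk
      rw [Finset.mem_range] at hk
      rw [huk (k+1) (by omega), huk k (by omega)]
      push_cast
      ring
    -- the Abel sum E
    set E : ℝ := ∑ k ∈ Finset.range (m+1), (c - u k) * (f (u (k+1)) - f (u k)) with hE
    have hEbound : |E| ≤ M * Var := by
      calc |E| ≤ ∑ k ∈ Finset.range (m+1), |(c - u k) * (f (u (k+1)) - f (u k))| :=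
            Finset.abs_sum_le_sum_abs _ _
        _ ≤ ∑ k ∈ Finset.range (m+1), M * |f (u (k+1)) - f (u k)| := by
            refine Finset.sum_le_sum fun k _ => ?_
            rw [abs_mul]
            exact mul_le_mul_of_nonneg_right (hM _ (hus k)) (abs_nonneg _)
        _ = M * ∑ k ∈ Finset.range (m+1), |f (u (k+1)) - f (u k)| := by
            rw [Finset.mul_sum]
        _ ≤ M * Var := by
            exact mul_le_mul_of_nonneg_left (sum_abs_le_evar f hfab hu hus (m+1)) hM0
    -- Abel identity
    have hAbel : E = (c - b) * f b - (c - a) * f a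
        + ∑ k ∈ Finset.range (m+1), (u (k+1) - u k) * f (u (k+1)) := by
      rw [hE, abel_id c u (fun k => f (u k)) (m+1), hu0, hum]
    -- Riemann sum error
    have hsplit : (∫ t in a..b, f t)
        = ∑ k ∈ Finset.range (m+1), ∫ t in (u k)..(u (k+1)), f t := by
      rw [← hu0, ← hum]
      exact (intervalIntegral.sum_integral_adjacent_intervals
        (fun k hk => hint _ _ (hus k) (hus (k+1)))).symm
    have hRerr : |(∑ k ∈ Finset.range (m+1), (u (k+1) - u k) * f (u (k+1)))
        - ∫ t in a..b, f t| ≤ δ * Var := by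
      rw [hsplit, ← Finset.sum_sub_distrib]
      have hterm : ∀ k ∈ Finset.range (m+1),
          |(u (k + 1) - u k) * f (u (k + 1)) - ∫ t in (u k)..(u (k+1)), f t|
            ≤ δ * (eVariationOn f (Set.Icc (u k) (u (k+1)))).toReal := by
        intro k hk
        have hle : u k ≤ u (k+1) := hu (Nat.le_succ k)
        have hconst : (u (k + 1) - u k) * f (u (k + 1))
            = ∫ _t in (u k)..(u (k+1)), f (u (k+1)) := by
          rw [intervalIntegral.integral_const, smul_eq_mul]
        rw [hconst, ← intervalIntegral.integral_sub (intervalIntegrable_const)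
          (hint _ _ (hus k) (hus (k+1)))]
        have hbound : ∀ t ∈ Set.uIoc (u k) (u (k+1)),
            ‖f (u (k+1)) - f t‖ ≤ (eVariationOn f (Set.Icc (u k) (u (k+1)))).toReal := by
          intro t ht
          rw [Set.uIoc_of_le hle] at ht
          have ht' : t ∈ Set.Icc (u k) (u (k+1)) := ⟨le_of_lt ht.1, ht.2⟩
          have h1 := eVariationOn.edist_le f (s := Set.Icc (u k) (u (k+1)))
            (x := u (k+1)) (y := t) ⟨hle, le_rfl⟩ ht'
          have hfin : eVariationOn f (Set.Icc (u k) (u (k+1))) ≠ ⊤ :=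
            ne_top_of_le_ne_top hfab
              (eVariationOn.mono f (Set.Icc_subset_Icc (hus k).1 (hus (k+1)).2))
          have := ENNReal.toReal_mono hfin h1
          rwa [edist_dist, ENNReal.toReal_ofReal dist_nonneg, Real.dist_eq,
            ← Real.norm_eq_abs] at this
        have := intervalIntegral.norm_integral_le_of_norm_le_const hbound
        rw [Real.norm_eq_abs] at this
        refine this.trans ?_
        rw [abs_of_nonneg (sub_nonneg.mpr hle), hstep k hk, mul_comm]
      calc |∑ k ∈ Finset.range (m+1), ((u (k + 1) - u k) * f (u (k + 1))
              - ∫ t in (u k)..(u (k+1)), f t)|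
          ≤ ∑ k ∈ Finset.range (m+1), |(u (k + 1) - u k) * f (u (k + 1))
              - ∫ t in (u k)..(u (k+1)), f t| := Finset.abs_sum_le_sum_abs _ _
        _ ≤ ∑ k ∈ Finset.range (m+1),
              δ * (eVariationOn f (Set.Icc (u k) (u (k+1)))).toReal :=
            Finset.sum_le_sum hterm
        _ = δ * ∑ k ∈ Finset.range (m+1),
              (eVariationOn f (Set.Icc (u k) (u (k+1)))).toReal := by rw [Finset.mul_sum]
        _ ≤ δ * Var := by
            refine mul_le_mul_of_nonneg_left ?_ hδ0
            have hsum := sum_evar_le f hu (m+1)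
            rw [hu0, hum] at hsum
            have hfink : ∀ k ∈ Finset.range (m+1),
                eVariationOn f (Set.Icc (u k) (u (k+1))) ≠ ⊤ := fun k _ =>
              ne_top_of_le_ne_top hfab
                (eVariationOn.mono f (Set.Icc_subset_Icc (hus k).1 (hus (k+1)).2))
            rw [hVar, ← ENNReal.toReal_sum hfink]
            exact ENNReal.toReal_mono hfab hsum
    -- combine
    calc |(c - b) * f b - (c - a) * f a + ∫ t in a..b, f t|
        = |E + ((∫ t in a..b, f t)
            - ∑ k ∈ Finset.range (m+1), (u (k+1) - u k) * f (u (k+1)))| := by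
          rw [hAbel]; congr 1; ring
      _ ≤ |E| + |(∫ t in a..b, f t)
            - ∑ k ∈ Finset.range (m+1), (u (k+1) - u k) * f (u (k+1))| := abs_add_le _ _
      _ ≤ M * Var + δ * Var := by
          refine add_le_add hEbound ?_
          rw [abs_sub_comm]
          exact hRerr
  -- take the limit m → ∞
  have hlim : Filter.Tendsto (fun m : ℕ => M * Var + (b - a) / (m + 1) * Var)
      Filter.atTop (nhds (M * Var)) := by
    have h1 : Filter.Tendsto (fun m : ℕ => (b - a) / (m + 1) * Var)
        Filter.atTop (nhds 0) := by
      have h2 : Filter.Tendsto (fun m : ℕ => (1 : ℝ) / (m + 1)) Filter.atTop (nhds 0) :=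
        tendsto_one_div_add_atTop_nhds_zero_nat
      have := (h2.const_mul (b - a)).mul_const Var
      simpa [div_eq_mul_inv, mul_assoc, mul_comm, mul_left_comm] using this
    simpa using Filter.Tendsto.const_add (M * Var) h1 |>.congr (fun m => rfl)
  exact ge_of_tendsto' hlim key

section Disc
variable {N : ℕ} {y : Fin N → ℝ}

lemma disc_bddAbove : BddAbove { r : ℝ | ∃ z ∈ Set.Icc (0:ℝ) 1,
    r = |((Finset.univ.filter (fun n : Fin N => y n < z)).card : ℝ) / N - z| } := by
  refine ⟨2, fun r hr => ?_⟩
  obtain ⟨z, hz, rfl⟩ := hr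
  have h1 : ((Finset.univ.filter (fun n : Fin N => y n < z)).card : ℝ) / N ∈
      Set.Icc (0:ℝ) 1 := by
    constructor
    · positivity
    · rcases Nat.eq_zero_or_pos N with h | h
      · subst h; simp
      · rw [div_le_one (by exact_mod_cast h)]
        exact_mod_cast (Finset.card_filter_le _ _).trans (by simp)
  calc |((Finset.univ.filter (fun n : Fin N => y n < z)).card : ℝ) / N - z|
      ≤ |((Finset.univ.filter (fun n : Fin N => y n < z)).card : ℝ) / N| + |z| :=
        abs_sub _ _
    _ ≤ 1 + 1 := add_le_add (abs_le.mpr ⟨by linarith [h1.1], h1.2⟩)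
        (abs_le.mpr ⟨by linarith [hz.1], hz.2⟩)
    _ = 2 := by norm_num

lemma disc_mem_le : ∀ z ∈ Set.Icc (0:ℝ) 1,
    |((Finset.univ.filter (fun n : Fin N => y n < z)).card : ℝ) / N - z| ≤ starDisc1 N y :=
  fun z hz => le_csSup disc_bddAbove ⟨z, hz, rfl⟩

lemma disc_nonneg (hy : ∀ n, y n ∈ Set.Icc (0:ℝ) 1) : 0 ≤ starDisc1 N y := by
  have h := disc_mem_le (y := y) 0 ⟨le_rfl, zero_le_one⟩
  have he : Finset.univ.filter (fun n : Fin N => y n < 0) = ∅ :=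
    Finset.filter_eq_empty_iff.mpr (fun n _ => not_lt.mpr (hy n).1)
  rw [he] at h
  simpa using h

lemma count_sorted (z : ℝ) :
    (Finset.univ.filter (fun n : Fin N => y n < z)).card
      = (Finset.univ.filter (fun n : Fin N => (y ∘ Tuple.sort y) n < z)).card := by
  refine (Finset.card_equiv (Tuple.sort y) fun n => ?_).symm
  simp

lemma disc_L1 (hN : 0 < N) (hy : ∀ n, y n ∈ Set.Icc (0:ℝ) 1) (j : Fin N) :
    (y ∘ Tuple.sort y) j - (j : ℕ) / N ≤ starDisc1 N y := by
  set x := y ∘ Tuple.sort y with hx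
  have hN' : (0:ℝ) < N := by exact_mod_cast hN
  have hxmono : Monotone x := Tuple.monotone_sort y
  have hxj : x j ∈ Set.Icc (0:ℝ) 1 := hy _
  have hcard : (Finset.univ.filter (fun n : Fin N => x n < x j)).card ≤ (j : ℕ) := by
    have hsub : Finset.univ.filter (fun n : Fin N => x n < x j) ⊆ Finset.Iio j := by
      intro n hn
      rw [Finset.mem_filter] at hn
      rw [Finset.mem_Iio]
      by_contra h
      exact absurd (hxmono (not_lt.mp h)) (not_le.mpr hn.2)
    calc _ ≤ (Finset.Iio j).card := Finset.card_le_card hsub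
      _ = (j : ℕ) := Fin.card_Iio _
  have hmem := disc_mem_le (y := y) (x j) hxj
  rw [count_sorted (x j)] at hmem
  have hc : ((Finset.univ.filter (fun n : Fin N => x n < x j)).card : ℝ) / N
      ≤ (j : ℕ) / N := by
    gcongr <;> exact_mod_cast hcard
  calc x j - (j:ℕ)/N ≤ x j
        - ((Finset.univ.filter (fun n : Fin N => x n < x j)).card : ℝ) / N :=
      sub_le_sub_left hc _
    _ ≤ |((Finset.univ.filter (fun n : Fin N => x n < x j)).card : ℝ) / N - x j| := by
        rw [abs_sub_comm]; exact le_abs_self _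
    _ ≤ starDisc1 N y := hmem

lemma disc_L2 (hN : 0 < N) (hy : ∀ n, y n ∈ Set.Icc (0:ℝ) 1) (j : Fin N) :
    ((j : ℕ) + 1) / N - (y ∘ Tuple.sort y) j ≤ starDisc1 N y := by
  set x := y ∘ Tuple.sort y with hx
  have hN' : (0:ℝ) < N := by exact_mod_cast hN
  have hxmono : Monotone x := Tuple.monotone_sort y
  have hxj : x j ∈ Set.Icc (0:ℝ) 1 := hy _
  by_cases hxj1 : x j < 1
  · refine le_of_forall_pos_le_add fun ε hε => ?_
    set z := min 1 (x j + ε) with hz_def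
    have hz : z ∈ Set.Icc (0:ℝ) 1 :=
      ⟨le_min zero_le_one (add_nonneg hxj.1 hε.le), min_le_left _ _⟩
    have hzgt : x j < z := lt_min hxj1 (lt_add_of_pos_right _ hε)
    have hcard : (j : ℕ) + 1
        ≤ (Finset.univ.filter (fun n : Fin N => x n < z)).card := by
      have hsub : Finset.Iic j ⊆ Finset.univ.filter (fun n : Fin N => x n < z) := by
        intro n hn
        rw [Finset.mem_Iic] at hn
        rw [Finset.mem_filter]
        exact ⟨Finset.mem_univ _, lt_of_le_of_lt (hxmono hn) hzgt⟩
      calc (j:ℕ) + 1 = (Finset.Iic j).card := (Fin.card_Iic _).symm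
        _ ≤ _ := Finset.card_le_card hsub
    have hmem := disc_mem_le (y := y) z hz
    rw [count_sorted z] at hmem
    have hc : ((j:ℕ) + 1 : ℝ) / N
        ≤ ((Finset.univ.filter (fun n : Fin N => x n < z)).card : ℝ) / N := by
      gcongr
      exact_mod_cast hcard
    have h1 : ((j:ℕ) + 1 : ℝ) / N - z ≤ starDisc1 N y :=
      le_trans (le_trans (sub_le_sub_right hc z) (le_abs_self _)) hmem
    have h2 : z ≤ x j + ε := min_le_right _ _
    linarith
  · have h1 : x j = 1 := le_antisymm hxj.2 (not_lt.mp hxj1)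
    have h2 : ((j:ℕ) + 1 : ℝ) / N ≤ 1 := by
      rw [div_le_one hN']
      exact_mod_cast j.isLt
    have hD0 := disc_nonneg hy
    linarith

end Disc


/-- **Koksma's inequality** in one dimension: for `f : [0,1] → ℝ` of bounded
total variation `V(f)` and points `y 1, …, y N ∈ [0,1]` with star-discrepancy `D*_N`,
`| (1/N) ∑ f(y n) - ∫_0^1 f | ≤ V(f) · D*_N`. -/
theorem stmt1 (N : ℕ) (hN : 0 < N) (f : ℝ → ℝ)
    (hf : BoundedVariationOn f (Set.Icc 0 1))
    (y : Fin N → ℝ) (hy : ∀ n, y n ∈ Set.Icc (0:ℝ) 1) :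
    |(∑ n, f (y n)) / N - ∫ t in (0:ℝ)..1, f t|
      ≤ (eVariationOn f (Set.Icc 0 1)).toReal * starDisc1 N y := by
  have hN' : (0:ℝ) < N := by exact_mod_cast hN
  set D := starDisc1 N y with hD
  have hD0 : 0 ≤ D := disc_nonneg hy
  set x : Fin N → ℝ := y ∘ Tuple.sort y with hx_def
  have hxmono : Monotone x := Tuple.monotone_sort y
  have hx : ∀ n, x n ∈ Set.Icc (0:ℝ) 1 := fun n => hy _
  -- the extended sequence
  set X : ℕ → ℝ := fun i => if i = 0 then 0 else if h2 : i - 1 < N then x ⟨i-1, h2⟩ else 1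
    with hX_def
  have hX0 : X 0 = 0 := by simp [hX_def]
  have hXN1 : X (N+1) = 1 := by simp [hX_def]
  have hXsucc : ∀ (j : ℕ) (hj : j < N), X (j+1) = x ⟨j, hj⟩ := by
    intro j hj
    simp [hX_def, hj]
  have hXmem : ∀ i, X i ∈ Set.Icc (0:ℝ) 1 := by
    intro i
    by_cases h : i = 0
    · subst h; rw [hX0]; exact ⟨le_rfl, zero_le_one⟩
    · by_cases h2 : i - 1 < N
      · simp only [hX_def, h, if_false, dif_pos h2]
        exact hx _
      · simp only [hX_def, h, if_false, dif_neg h2]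
        exact ⟨zero_le_one, le_rfl⟩
  have hXmono : Monotone X := by
    apply monotone_nat_of_le_succ
    intro i
    match i with
    | 0 => rw [hX0]; exact (hXmem 1).1
    | (j+1) =>
      by_cases hj : j < N
      · rw [hXsucc j hj]
        by_cases hj1 : j + 1 < N
        · rw [hXsucc (j+1) hj1]
          exact hxmono (by simp [Fin.mk_le_mk])
        · have : X (j+2) = 1 := by
            simp only [hX_def]
            norm_num
            intro h
            omega
          rw [this]
          exact (hx _).2
      · have h1 : X (j+1) = 1 := by
          simp only [hX_def]
          norm_num
          intro h
          omega
        have h2 : X (j+2) = 1 := by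
          simp only [hX_def]
          norm_num
          intro h
          omega
        rw [h1, h2]
  -- the constant bound on each subinterval
  have hconst : ∀ i ∈ Finset.range (N+1), ∀ t ∈ Set.Icc (X i) (X (i+1)),
      |(i:ℝ)/N - t| ≤ D := by
    intro i hi t ht
    rw [Finset.mem_range] at hi
    rw [abs_le]
    constructor
    · -- -D ≤ i/N - t, i.e. t - i/N ≤ D, using t ≤ X (i+1)
      rw [neg_le, neg_sub]
      by_cases hiN : i < N
      · have := disc_L1 hN hy ⟨i, hiN⟩
        rw [← hx_def] at this
        have h2 : t ≤ x ⟨i, hiN⟩ := by rw [← hXsucc i hiN]; exact ht.2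
        simp only [Fin.val_mk] at this
        linarith
      · have hiN' : i = N := by omega
        have h2 : t ≤ 1 := by
          rw [hiN'] at ht
          rw [← hXN1]
          exact ht.2
        have h3 : (i:ℝ)/N = 1 := by
          rw [hiN']
          exact div_self (ne_of_gt hN')
        rw [h3]
        linarith
    · -- i/N - t ≤ D, using X i ≤ t
      by_cases hi0 : i = 0
      · subst hi0
        have h2 : 0 ≤ t := by rw [← hX0]; exact ht.1
        simp only [Nat.cast_zero, zero_div, zero_sub]
        linarith
      · obtain ⟨j, rfl⟩ : ∃ j, i = j + 1 := ⟨i - 1, by omega⟩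
        have hjN : j < N := by omega
        have := disc_L2 hN hy ⟨j, hjN⟩
        rw [← hx_def] at this
        have h2 : x ⟨j, hjN⟩ ≤ t := by rw [← hXsucc j hjN]; exact ht.1
        simp only [Fin.val_mk] at this
        push_cast
        linarith
  -- integrability on the pieces
  have hint : ∀ k, IntervalIntegrable f MeasureTheory.volume (X k) (X (k+1)) :=
    fun k => bv_intervalIntegrable f hf (hXmem k) (hXmem (k+1))
  -- split the integral
  have hsplit : (∫ t in (0:ℝ)..1, f t)
      = ∑ i ∈ Finset.range (N+1), ∫ t in (X i)..(X (i+1)), f t := by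
    rw [← hX0, ← hXN1]
    exact (intervalIntegral.sum_integral_adjacent_intervals fun k _ => hint k).symm
  -- telescoping part
  have hsum_b : ∑ i ∈ Finset.range (N+1),
      (((i:ℝ)/N - X (i+1)) * f (X (i+1)) - ((i:ℝ)/N - X i) * f (X i))
        = -((∑ n, f (y n)) / N) := by
    have hterm : ∀ i ∈ Finset.range (N+1),
        ((i:ℝ)/N - X (i+1)) * f (X (i+1)) - ((i:ℝ)/N - X i) * f (X i)
          = ((((i+1:ℕ):ℝ)/N - X (i+1)) * f (X (i+1)) - (((i:ℕ):ℝ)/N - X i) * f (X i))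
            - (1/N) * f (X (i+1)) := by
      intro i _
      push_cast
      field_simp
      ring
    rw [Finset.sum_congr rfl hterm, Finset.sum_sub_distrib, Finset.sum_range_sub
      (fun i => (((i:ℕ):ℝ)/N - X i) * f (X i))]
    have e0 : (((0:ℕ):ℝ)/N - X 0) * f (X 0) = 0 := by rw [hX0]; norm_num
    have eN : ((((N+1:ℕ)):ℝ)/N - X (N+1)) * f (X (N+1)) = (1/N) * f 1 := by
      rw [hXN1]
      push_cast
      field_simp
      ring
    rw [e0, eN, sub_zero]
    have hsplit2 : ∑ i ∈ Finset.range (N+1), (1/(N:ℝ)) * f (X (i+1))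
        = (∑ i ∈ Finset.range N, (1/(N:ℝ)) * f (X (i+1))) + (1/N) * f 1 := by
      rw [Finset.sum_range_succ, hXN1]
    have hsum_x : ∑ i ∈ Finset.range N, (1/(N:ℝ)) * f (X (i+1))
        = (∑ n, f (y n)) / N := by
      have h1 : ∑ i ∈ Finset.range N, (1/(N:ℝ)) * f (X (i+1))
          = ∑ n : Fin N, (1/(N:ℝ)) * f (x n) := by
        rw [← Fin.sum_univ_eq_sum_range (fun i => (1/(N:ℝ)) * f (X (i+1))) N]
        refine Finset.sum_congr rfl fun n _ => ?_
        rw [hXsucc n.1 n.isLt, Fin.eta]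
      have h2 : ∑ n : Fin N, (1/(N:ℝ)) * f (x n) = ∑ n : Fin N, (1/(N:ℝ)) * f (y n) :=
        Equiv.sum_comp (Tuple.sort y) (fun n => (1/(N:ℝ)) * f (y n))
      rw [h1, h2, ← Finset.mul_sum]
      ring
    rw [hsplit2, hsum_x]
    ring
  -- final assembly
  have hkey : (∑ n, f (y n)) / N - ∫ t in (0:ℝ)..1, f t
      = -∑ i ∈ Finset.range (N+1),
          (((i:ℝ)/N - X (i+1)) * f (X (i+1)) - ((i:ℝ)/N - X i) * f (X i)
            + ∫ t in (X i)..(X (i+1)), f t) := by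
    rw [Finset.sum_add_distrib, hsum_b, ← hsplit]
    ring
  rw [hkey, abs_neg]
  have hbound : ∀ i ∈ Finset.range (N+1),
      |((i:ℝ)/N - X (i+1)) * f (X (i+1)) - ((i:ℝ)/N - X i) * f (X i)
        + ∫ t in (X i)..(X (i+1)), f t|
        ≤ D * (eVariationOn f (Set.Icc (X i) (X (i+1)))).toReal := by
    intro i hi
    exact stieltjes_bound f (hXmono (Nat.le_succ i))
      (Set.Icc_subset_Icc (hXmem i).1 (hXmem (i+1)).2) hf (hconst i hi)
  have hfin_i : ∀ i ∈ Finset.range (N+1),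
      eVariationOn f (Set.Icc (X i) (X (i+1))) ≠ ⊤ := fun i _ =>
    ne_top_of_le_ne_top hf
      (eVariationOn.mono f (Set.Icc_subset_Icc (hXmem i).1 (hXmem (i+1)).2))
  calc |∑ i ∈ Finset.range (N+1),
          (((i:ℝ)/N - X (i+1)) * f (X (i+1)) - ((i:ℝ)/N - X i) * f (X i)
            + ∫ t in (X i)..(X (i+1)), f t)|
      ≤ ∑ i ∈ Finset.range (N+1),
          |((i:ℝ)/N - X (i+1)) * f (X (i+1)) - ((i:ℝ)/N - X i) * f (X i)
            + ∫ t in (X i)..(X (i+1)), f t| := Finset.abs_sum_le_sum_abs _ _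
    _ ≤ ∑ i ∈ Finset.range (N+1),
          D * (eVariationOn f (Set.Icc (X i) (X (i+1)))).toReal :=
        Finset.sum_le_sum hbound
    _ = D * ∑ i ∈ Finset.range (N+1),
          (eVariationOn f (Set.Icc (X i) (X (i+1)))).toReal := by rw [Finset.mul_sum]
    _ ≤ D * (eVariationOn f (Set.Icc 0 1)).toReal := by
        refine mul_le_mul_of_nonneg_left ?_ hD0
        have hsum := sum_evar_le f hXmono (N+1)
        rw [hX0, hXN1] at hsum
        rw [← ENNReal.toReal_sum hfin_i]
        exact ENNReal.toReal_mono hf hsum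
    _ = (eVariationOn f (Set.Icc 0 1)).toReal * D := mul_comm _ _
end

section
/- Let $d \ge 3$ and define $\mathcal{L}^*_d : [0,1]^d \to \mathbb{R}$ by $\mathcal{L}^*_d(y) = \max\{\sum_{i=1}^d y_i - 1/2,\ 0\}$. Then the Vitali variation of $\mathcal{L}^*_d$ on $[0,1]^d$ is infinite; in particular, by restricting to a subcube, for the ladder $\mathcal{Y} = \prod_{i=1}^d \{0, 1/(2m), 2/(2m), \dots, (m-1)/(2m)\}$ the alternating vertex sums are unbounded as $m \to \infty$. -/
open Finset Filter

/-- Vitali-type variation of `f` over the face where coordinates outside `s` are `1`;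
with `s = univ` this is the Vitali variation of `f` on `[0,1]^d`. -/
noncomputable def vitaliVarFace (d : ℕ) (f : (Fin d → ℝ) → ℝ) (s : Finset (Fin d)) :
    ENNReal :=
  ⨆ (m : Fin d → ℕ) (pts : ∀ i, Fin (m i + 1) → ℝ)
    (_ : ∀ i, StrictMono (pts i)) (_ : ∀ i, pts i 0 = 0)
    (_ : ∀ i, pts i (Fin.last (m i)) = 1),
    ∑ c : (∀ i : {i // i ∈ s}, Fin (m i.1)),
      ENNReal.ofReal |∑ v ∈ s.powerset, (-1 : ℝ) ^ v.card *
        f (fun i => if h : i ∈ s then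
            (if i ∈ v then pts i (Fin.castSucc (c ⟨i, h⟩)) else pts i (Fin.succ (c ⟨i, h⟩)))
          else 1)|

/-- The one-hidden-layer ReLU network `ℒ*_d(y) = max{∑ y_i - 1/2, 0}`. -/
noncomputable def reluNet (d : ℕ) : (Fin d → ℝ) → ℝ :=
  fun y => max (∑ i, y i - 1 / 2) 0

section helpers

private lemma aux1 {ι : Type*} [DecidableEq ι] (s : Finset ι) (hs : s.Nonempty) :
    ∑ v ∈ s.powerset, (-1 : ℝ) ^ v.card = 0 := by
  have h := Finset.sum_powerset_neg_one_pow_card_of_nonempty hs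
  exact_mod_cast congrArg (fun z : ℤ => (z : ℝ)) h

private lemma aux2 {ι : Type*} [DecidableEq ι] (s : Finset ι) (hs : 2 ≤ s.card) :
    ∑ v ∈ s.powerset, (-1 : ℝ) ^ v.card * v.card = 0 := by
  obtain ⟨a, ha⟩ : s.Nonempty := Finset.card_pos.mp (by omega)
  have hins : s = insert a (s.erase a) := (Finset.insert_erase ha).symm
  have hae : a ∉ s.erase a := Finset.notMem_erase a s
  have hne : (s.erase a).Nonempty := by
    rw [← Finset.card_pos, Finset.card_erase_of_mem ha]; omega
  rw [hins, Finset.sum_powerset_insert hae]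
  have h1 : ∑ v ∈ (s.erase a).powerset,
      (-1:ℝ)^(insert a v).card * (insert a v).card
        = ∑ v ∈ (s.erase a).powerset,
          (-((-1:ℝ)^v.card * v.card) - (-1:ℝ)^v.card) := by
    refine Finset.sum_congr rfl fun v hv => ?_
    have hav : a ∉ v := fun h => hae (Finset.mem_powerset.mp hv h)
    rw [Finset.card_insert_of_notMem hav]
    push_cast
    ring
  rw [h1, Finset.sum_sub_distrib, Finset.sum_neg_distrib, aux1 _ hne]
  ring

private lemma key (d : ℕ) (hd : 2 ≤ d) (h : ℝ) (hh : 0 < h) :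
    |∑ v : Finset (Fin d), (-1 : ℝ) ^ v.card *
      max (((d : ℝ) - 1 - v.card) * h) 0| = h := by
  have hne : Nonempty (Fin d) := ⟨⟨0, by omega⟩⟩
  have hstep : ∀ v : Finset (Fin d),
      (-1:ℝ)^v.card * max (((d:ℝ) - 1 - v.card) * h) 0
        = (-1:ℝ)^v.card * (((d:ℝ) - 1 - v.card) * h)
          + (if v = Finset.univ then (-1:ℝ)^v.card * h else 0) := by
    intro v
    by_cases hv : v = Finset.univ
    · subst hv
      rw [if_pos rfl, Finset.card_univ, Fintype.card_fin,
        max_eq_right (by nlinarith : ((d:ℝ) - 1 - d) * h ≤ 0)]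
      ring
    · have hlt : v.card < d := by
        have := (Finset.card_lt_iff_ne_univ v).mpr hv
        simpa using this
      have hcle : (v.card : ℝ) ≤ (d:ℝ) - 1 := by
        have : (v.card : ℝ) + 1 ≤ d := by exact_mod_cast hlt
        linarith
      rw [max_eq_left (by nlinarith : (0:ℝ) ≤ ((d:ℝ) - 1 - v.card) * h),
        if_neg hv, add_zero]
  rw [Finset.sum_congr rfl fun v _ => hstep v, Finset.sum_add_distrib]
  have h2 : ∑ v : Finset (Fin d), (if v = Finset.univ then (-1:ℝ)^v.card * h else 0)
      = (-1:ℝ)^d * h := by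
    rw [Finset.sum_ite_eq' Finset.univ Finset.univ (fun v => (-1:ℝ)^v.card * h)]
    simp [Finset.card_univ]
  have h1 : ∑ v : Finset (Fin d), (-1:ℝ)^v.card * (((d:ℝ) - 1 - v.card) * h) = 0 := by
    have hc : ∀ v : Finset (Fin d), (-1:ℝ)^v.card * (((d:ℝ)-1-v.card)*h)
        = (((d:ℝ)-1)*h) * (-1:ℝ)^v.card - h * ((-1:ℝ)^v.card * v.card) := by
      intro v; ring
    rw [Finset.sum_congr rfl fun v _ => hc v, Finset.sum_sub_distrib,
      ← Finset.mul_sum, ← Finset.mul_sum, ← Finset.powerset_univ,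
      aux1 _ Finset.univ_nonempty, aux2 _ (by simpa using hd)]
    ring
  rw [h1, h2, zero_add]
  simp [abs_mul, abs_of_pos hh]

private lemma keyA (d m : ℕ) (hd : 3 ≤ d) (hm : 1 ≤ m) (c : Fin d → ℕ)
    (hc : ∑ i, c i = m - 1) :
    |∑ v : Finset (Fin d), (-1:ℝ)^v.card *
      reluNet d (fun i => (if i ∈ v then (c i : ℝ) else (c i : ℝ) + 1) / (2 * m))|
      = 1 / (2 * m) := by
  have hm0 : (0:ℝ) < m := by exact_mod_cast hm
  have hcs : (∑ i, (c i : ℝ)) = (m:ℝ) - 1 := by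
    rw [← Nat.cast_sum, hc, Nat.cast_sub hm, Nat.cast_one]
  have hterm : ∀ v : Finset (Fin d),
      reluNet d (fun i => (if i ∈ v then (c i : ℝ) else (c i : ℝ) + 1) / (2 * m))
        = max (((d:ℝ) - 1 - v.card) * (1/(2*m))) 0 := by
    intro v
    unfold reluNet
    congr 1
    have hsum : ∑ i, (if i ∈ v then (c i:ℝ) else (c i:ℝ)+1) / (2*m)
        = ((m:ℝ) - 1 + ((d:ℝ) - v.card)) / (2*m) := by
      rw [← Finset.sum_div]
      congr 1
      have hpt : ∀ i, (if i ∈ v then (c i:ℝ) else (c i:ℝ)+1)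
          = (c i:ℝ) + (if i ∈ v then 0 else 1) := by
        intro i; split <;> ring
      rw [Finset.sum_congr rfl fun i _ => hpt i, Finset.sum_add_distrib, hcs]
      congr 1
      have : ∑ i, (if i ∈ v then (0:ℝ) else 1) = ∑ i, ((1:ℝ) - if i ∈ v then 1 else 0) := by
        refine Finset.sum_congr rfl fun i _ => ?_
        split <;> ring
      rw [this, Finset.sum_sub_distrib, Finset.sum_const, Finset.sum_boole]
      have : Finset.univ.filter (fun i => i ∈ v) = v := by
        ext i; simp
      rw [this]
      simp [Finset.card_univ, mul_comm]
    rw [hsum]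
    have h2m : (2*(m:ℝ)) ≠ 0 := by positivity
    field_simp
    ring
  rw [Finset.sum_congr rfl fun v _ => by rw [hterm v]]
  exact key d (by omega) _ (by positivity)

noncomputable def Bset (ι : Type*) [Fintype ι] [DecidableEq ι] (M : ℕ) :
    Finset (ι → Fin M) :=
  have : DecidablePred (fun c : ι → Fin M =>
      (∑ i, (c i : ℕ)) = M - 1 ∧ ∀ i, (c i : ℕ) ≤ M - 2) := fun _ => Classical.dec _
  Finset.univ.filter (fun c : ι → Fin M =>
      (∑ i, (c i : ℕ)) = M - 1 ∧ ∀ i, (c i : ℕ) ≤ M - 2)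

lemma Bset_mem {ι : Type*} [Fintype ι] [DecidableEq ι] {M : ℕ} {c : ι → Fin M} :
    c ∈ Bset ι M ↔ (∑ i, (c i : ℕ)) = M - 1 ∧ ∀ i, (c i : ℕ) ≤ M - 2 := by
  simp [Bset]


private lemma count {ι : Type*} [Fintype ι] [DecidableEq ι] (i0 i1 i2 : ι)
    (h01 : i0 ≠ i1) (h02 : i0 ≠ i2) (h12 : i1 ≠ i2) (M q : ℕ)
    (hq : 1 ≤ q) (hM : 2*q + 4 ≤ M) :
    q * q ≤ (Bset ι M).card := by
  set e : Fin q × Fin q → (ι → Fin M) := fun p i =>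
    if i = i0 then ⟨p.1 + 1, by omega⟩
    else if i = i1 then ⟨p.2 + 1, by omega⟩
    else if i = i2 then ⟨M - 3 - p.1 - p.2, by omega⟩
    else ⟨0, by omega⟩ with he
  have hval : ∀ p : Fin q × Fin q, ∀ i, ((e p i : ℕ)) =
      if i = i0 then (p.1 : ℕ) + 1
      else if i = i1 then (p.2 : ℕ) + 1
      else if i = i2 then M - 3 - p.1 - p.2
      else 0 := by
    intro p i
    simp only [he, apply_ite (Fin.val)]
  have hmem : ∀ p : Fin q × Fin q, e p ∈ Bset ι M := by
    intro p
    have hp1 : (p.1 : ℕ) < q := p.1.isLt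
    have hp2 : (p.2 : ℕ) < q := p.2.isLt
    rw [Bset_mem]
    refine ⟨?_, ?_⟩
    · have hsub : ∑ i, ((e p i : ℕ)) = ∑ i ∈ ({i0, i1, i2} : Finset ι), ((e p i : ℕ)) := by
        refine (Finset.sum_subset (Finset.subset_univ _) ?_).symm
        intro x _ hx
        simp only [Finset.mem_insert, Finset.mem_singleton, not_or] at hx
        rw [hval, if_neg hx.1, if_neg hx.2.1, if_neg hx.2.2]
      rw [hsub, Finset.sum_insert (by simp [h01, h02]),
        Finset.sum_insert (by simp [h12]), Finset.sum_singleton,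
        hval, hval, hval, if_pos rfl, if_neg (Ne.symm h01), if_pos rfl,
        if_neg (Ne.symm h02), if_neg (Ne.symm h12), if_pos rfl]
      omega
    · intro i
      rw [hval]
      split_ifs <;> omega
  have hinj : Set.InjOn e (Finset.univ : Finset (Fin q × Fin q)) := by
    intro p _ p' _ hpp
    have h0 := congrFun hpp i0
    have h1 := congrFun hpp i1
    simp only [he, if_pos rfl, if_neg (Ne.symm h01)] at h0 h1
    have e0 : (p.1 : ℕ) = p'.1 := by
      have := congrArg Fin.val h0; simpa using this
    have e1 : (p.2 : ℕ) = p'.2 := by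
      have := congrArg Fin.val h1; simpa using this
    exact Prod.ext (Fin.ext e0) (Fin.ext e1)
  have hcard := Finset.card_le_card_of_injOn e (fun p _ => hmem p) hinj
  simpa using hcard

end helpers

/-- For `d ≥ 3`, the network `ℒ*_d(y) = max{∑ y_i - 1/2, 0}` has infinite Vitali
variation on `[0,1]^d`; in particular, for the ladders with points `k/(2m)` the
alternating vertex sums over the cells `∏ [c_i/(2m), (c_i+1)/(2m)]` are unbounded
as `m → ∞`. -/

theorem stmt8 (d : ℕ) (hd : 3 ≤ d) :
    vitaliVarFace d (reluNet d) Finset.univ = ⊤ ∧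
    Tendsto (fun m : ℕ =>
      ∑ c : Fin d → Fin m,
        |∑ v : Finset (Fin d), (-1 : ℝ) ^ v.card *
          reluNet d (fun i =>
            (if i ∈ v then (c i : ℝ) else (c i : ℝ) + 1) / (2 * (m : ℝ)))|)
      atTop atTop := by
  have hi0 : (0 : ℕ) < d := by omega
  have hi1 : (1 : ℕ) < d := by omega
  have hi2 : (2 : ℕ) < d := by omega
  constructor
  · -- Part 1
    have hclaim : ∀ n : ℕ, (n : ENNReal) ≤ vitaliVarFace d (reluNet d) Finset.univ := by
      intro n
      set q : ℕ := 8 * (n + 1) with hqdef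
      set M : ℕ := 2 * q + 4 with hMdef
      have hM2 : 2 ≤ M := by omega
      have hM0 : (0:ℝ) < M := by positivity
      set P : ∀ i : Fin d, Fin (M + 1) → ℝ :=
        fun i k => if (k : ℕ) = M then 1 else (k : ℕ) / (2 * M) with hP
      have hPval : ∀ (i : Fin d) (k : Fin (M+1)), (k : ℕ) ≠ M → P i k = (k : ℕ) / (2 * M) :=
        fun i k hk => if_neg hk
      have hmono : ∀ i, StrictMono (P i) := by
        intro i j k hjk
        have hj : (j : ℕ) < (k : ℕ) := hjk
        have hkM : (k : ℕ) ≤ M := by omega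
        by_cases hk : (k : ℕ) = M
        · rw [hPval i j (by omega), hP]
          simp only [if_pos hk]
          rw [div_lt_one (by positivity)]
          have : ((j : ℕ) : ℝ) < M := by exact_mod_cast (by omega : (j:ℕ) < M)
          linarith
        · rw [hPval i j (by omega), hPval i k hk]
          have hjr : ((j:ℕ):ℝ) < ((k:ℕ):ℝ) := by exact_mod_cast hj
          gcongr
      have hP0 : ∀ i, P i 0 = 0 := by
        intro i
        rw [hPval i 0 (by simp)]
        simp
      have hPlast : ∀ i, P i (Fin.last M) = 1 := by
        intro i
        simp [hP, Fin.last]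
      have hle : (∑ c : (∀ i : {i // i ∈ (Finset.univ : Finset (Fin d))},
            Fin ((fun _ : Fin d => M) i.1)),
          ENNReal.ofReal |∑ v ∈ (Finset.univ : Finset (Fin d)).powerset, (-1 : ℝ) ^ v.card *
            reluNet d (fun i => if h : i ∈ (Finset.univ : Finset (Fin d)) then
                (if i ∈ v then P i (Fin.castSucc (c ⟨i, h⟩)) else P i (Fin.succ (c ⟨i, h⟩)))
              else 1)|)
          ≤ vitaliVarFace d (reluNet d) Finset.univ := by
        rw [vitaliVarFace]
        exact le_iSup_of_le (fun _ => M) (le_iSup_of_le P (le_iSup_of_le hmono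
          (le_iSup_of_le hP0 (le_iSup_of_le hPlast le_rfl))))
      refine le_trans ?_ hle
      -- lower bound the instantiated sum
      have hinner : ∀ c ∈ Bset {i // i ∈ (Finset.univ : Finset (Fin d))} M,
          |∑ v ∈ (Finset.univ : Finset (Fin d)).powerset, (-1 : ℝ) ^ v.card *
            reluNet d (fun i => if h : i ∈ (Finset.univ : Finset (Fin d)) then
                (if i ∈ v then P i (Fin.castSucc (c ⟨i, h⟩)) else P i (Fin.succ (c ⟨i, h⟩)))
              else 1)| = 1 / (2*M) := by
        intro c hc
        obtain ⟨hsum', hbd⟩ := Bset_mem.mp hc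
        set cn : Fin d → ℕ := fun i => ((c ⟨i, Finset.mem_univ i⟩ : Fin M) : ℕ) with hcn
        have hsum : ∑ i, cn i = M - 1 := by
          rw [← hsum']
          exact (Fintype.sum_equiv (Equiv.subtypeUnivEquiv (fun i => Finset.mem_univ i))
            _ _ (fun x => rfl)).symm
        have harg : ∀ v : Finset (Fin d),
            (fun i => if h : i ∈ (Finset.univ : Finset (Fin d)) then
                (if i ∈ v then P i (Fin.castSucc (c ⟨i, h⟩)) else P i (Fin.succ (c ⟨i, h⟩)))
              else 1)
            = (fun i => (if i ∈ v then (cn i : ℝ) else (cn i : ℝ) + 1) / (2 * (M:ℝ))) := by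
          intro v
          funext i
          rw [dif_pos (Finset.mem_univ i)]
          have hbi : cn i ≤ M - 2 := hbd ⟨i, Finset.mem_univ i⟩
          have hc1 : ((Fin.castSucc (c ⟨i, Finset.mem_univ i⟩) : Fin (M+1)) : ℕ) = cn i := rfl
          have hc2 : ((Fin.succ (c ⟨i, Finset.mem_univ i⟩) : Fin (M+1)) : ℕ) = cn i + 1 := rfl
          split_ifs with hiv
          · rw [hPval i _ (by rw [hc1]; omega), hc1]
          · rw [hPval i _ (by rw [hc2]; omega), hc2]
            push_cast
            ring
        rw [Finset.powerset_univ]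
        calc |∑ v ∈ (Finset.univ : Finset (Finset (Fin d))), (-1 : ℝ) ^ v.card *
              reluNet d (fun i => if h : i ∈ (Finset.univ : Finset (Fin d)) then
                (if i ∈ v then P i (Fin.castSucc (c ⟨i, h⟩)) else P i (Fin.succ (c ⟨i, h⟩)))
              else 1)|
            = |∑ v : Finset (Fin d), (-1 : ℝ) ^ v.card *
              reluNet d (fun i => (if i ∈ v then (cn i : ℝ) else (cn i : ℝ) + 1) / (2 * (M:ℝ)))| := by
              congr 1
              exact Finset.sum_congr rfl fun v _ => by rw [harg v]
          _ = 1 / (2*M) := keyA d M hd (by omega) cn hsum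
      have hcard := count (⟨⟨0, hi0⟩, Finset.mem_univ _⟩ : {i // i ∈ (Finset.univ : Finset (Fin d))})
        ⟨⟨1, hi1⟩, Finset.mem_univ _⟩ ⟨⟨2, hi2⟩, Finset.mem_univ _⟩
        (by simp [Subtype.ext_iff, Fin.ext_iff]) (by simp [Subtype.ext_iff, Fin.ext_iff])
        (by simp [Subtype.ext_iff, Fin.ext_iff]) M q (by omega) (by omega)
      calc (n : ENNReal) = ENNReal.ofReal n := (ENNReal.ofReal_natCast n).symm
        _ ≤ ENNReal.ofReal (((q*q : ℕ) : ℝ) * (1/(2*M))) := by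
            apply ENNReal.ofReal_le_ofReal
            have hqr : (q:ℝ) = 8*((n:ℝ)+1) := by rw [hqdef]; push_cast; ring
            have hMr : (M:ℝ) = 2*(q:ℝ)+4 := by rw [hMdef]; push_cast; ring
            rw [mul_one_div, le_div_iff₀ (by positivity)]
            push_cast
            nlinarith [Nat.cast_nonneg (α := ℝ) n, hqr, hMr]
        _ = ((q*q : ℕ) : ENNReal) * ENNReal.ofReal (1/(2*M)) := by
            rw [ENNReal.ofReal_mul (by positivity)]
            congr 1
            exact ENNReal.ofReal_natCast _
        _ ≤ (((Bset {i // i ∈ (Finset.univ : Finset (Fin d))} M).card : ℕ) : ENNReal)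
              * ENNReal.ofReal (1/(2*M)) := by
            gcongr

        _ = ∑ c ∈ Bset {i // i ∈ (Finset.univ : Finset (Fin d))} M,
              ENNReal.ofReal |∑ v ∈ (Finset.univ : Finset (Fin d)).powerset, (-1 : ℝ) ^ v.card *
                reluNet d (fun i => if h : i ∈ (Finset.univ : Finset (Fin d)) then
                    (if i ∈ v then P i (Fin.castSucc (c ⟨i, h⟩)) else P i (Fin.succ (c ⟨i, h⟩)))
                  else 1)| := by
            rw [Finset.sum_congr rfl (fun c hc => by rw [hinner c hc]),
              Finset.sum_const, nsmul_eq_mul]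
        _ ≤ _ := Finset.sum_le_sum_of_subset (Finset.subset_univ _)

    by_contra hne
    obtain ⟨n, hn⟩ := ENNReal.exists_nat_gt hne
    exact absurd (hclaim n) (not_le.mpr hn)
  · -- Part 2
    have hTlb : ∀ m : ℕ, 10 ≤ m → (m:ℝ)/32 ≤
        ∑ c : Fin d → Fin m,
          |∑ v : Finset (Fin d), (-1 : ℝ) ^ v.card *
            reluNet d (fun i =>
              (if i ∈ v then (c i : ℝ) else (c i : ℝ) + 1) / (2 * (m : ℝ)))| := by
      intro m hm
      have hm0 : (0:ℝ) < m := by positivity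
      set q : ℕ := (m - 4) / 2 with hqdef
      have hq1 : 1 ≤ q := by omega
      have hqM : 2*q + 4 ≤ m := by omega
      have hm4q : m ≤ 4 * q := by omega
      have hcard := count (⟨0, hi0⟩ : Fin d) ⟨1, hi1⟩ ⟨2, hi2⟩
        (by simp [Fin.ext_iff]) (by simp [Fin.ext_iff]) (by simp [Fin.ext_iff]) m q hq1 hqM
      have hterm : ∀ c ∈ Bset (Fin d) m, |∑ v : Finset (Fin d), (-1 : ℝ) ^ v.card *
            reluNet d (fun i =>
              (if i ∈ v then (c i : ℝ) else (c i : ℝ) + 1) / (2 * (m : ℝ)))| = 1/(2*m) := by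
        intro c hcB
        exact keyA d m hd (by omega) (fun i => (c i : ℕ)) (Bset_mem.mp hcB).1
      have hqr : (m:ℝ)/4 ≤ q := by
        have : (m:ℝ) ≤ 4*q := by exact_mod_cast hm4q
        linarith
      calc (m:ℝ)/32 ≤ ((q*q : ℕ) : ℝ) * (1/(2*m)) := by
            push_cast
            rw [mul_one_div, le_div_iff₀ (by positivity)]
            nlinarith
        _ ≤ (((Bset (Fin d) m).card : ℕ) : ℝ) * (1/(2*m)) := by
            have : ((q*q : ℕ) : ℝ) ≤ (((Bset (Fin d) m).card : ℕ) : ℝ) := by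
              exact_mod_cast hcard
            have h0 : (0:ℝ) ≤ 1/(2*m) := by positivity
            nlinarith
        _ = ∑ c ∈ Bset (Fin d) m, |∑ v : Finset (Fin d), (-1 : ℝ) ^ v.card *
            reluNet d (fun i =>
              (if i ∈ v then (c i : ℝ) else (c i : ℝ) + 1) / (2 * (m : ℝ)))| := by
            rw [Finset.sum_congr rfl hterm, Finset.sum_const, nsmul_eq_mul]
        _ ≤ _ := Finset.sum_le_sum_of_subset_of_nonneg
            (by simp [Bset, Finset.filter_subset])
            (fun c _ _ => abs_nonneg _)
    refine tendsto_atTop_mono' atTop ?_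
      (Tendsto.atTop_div_const (by norm_num : (0:ℝ) < 32) tendsto_natCast_atTop_atTop)
    filter_upwards [eventually_ge_atTop 10] with m hm using hTlb m hm
end
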